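/- arXiv:1112.2974 — 3 statements merged into one kernel-verified Lean document; each statement's English description precedes it below -/
import Mathlib

section
/- Let n ≥ 1, X ⊆ {1,...,n} with X ∩ {1,...,⌊n/2⌋} = ∅. Let ψ be a conjunction of edge atoms over ordered variables x_1 < ... < x_m, each x_i quantified by ∃^{≥λ_i} with λ_i ∈ X. Then K_n satisfies the quantified sentence (in the Prover–Adversary game semantics) if and only if the graph D_ψ does not contain, as a subgraph, an (n - λ_i + 1)-star whose n - λ_i + 1 leaves all precede its centre x_i in the variable order. -/
/-!
Both players have greedy strategies. If every variable `i` has at most `n - λ_i` earlier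
neighbours, Prover offers at step `i` values avoiding the colours of those neighbours, so the
play stays a proper colouring. Conversely, given a star with centre `i`, Adversary keeps the
colours of its leaves pairwise distinct: at a leaf `k` at most `n - λ_i` of them are taken, and
`n - λ_i < λ_k` because both `λ`'s exceed `n / 2`. At the centre the `λ_i` offered values then
meet the `n - λ_i + 1` leaf colours, by pigeonhole.
-/

/-- The counting-quantifier game with position-dependent witness-set sizes `lam`:
with `k` moves remaining and play `l` so far, Prover offers a set of `lam l.length`
vertices, Adversary picks one; Prover wins iff the final play satisfies `P`. -/
def qGame {V : Type*} [DecidableEq V] (lam : ℕ → ℕ) (P : List V → Prop) :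
    ℕ → List V → Prop
  | 0, l => P l
  | k + 1, l => ∃ S : Finset V, S.card = lam l.length ∧ ∀ v ∈ S, qGame lam P k (l ++ [v])

open Finset

section Game

variable {V : Type*} [DecidableEq V] {lam : ℕ → ℕ} {P : List V → Prop} {m : ℕ}

theorem qGame_of_invariant (Inv : List V → Prop)
    (hstep : ∀ l : List V, l.length < m → Inv l →
      ∃ S : Finset V, #S = lam l.length ∧ ∀ v ∈ S, Inv (l ++ [v]))
    (hend : ∀ l : List V, l.length = m → Inv l → P l) :
    ∀ (k : ℕ) (l : List V), l.length + k = m → Inv l → qGame lam P k l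
  | 0, l, hl, hInv => hend l hl hInv
  | k + 1, l, hl, hInv => by
    obtain ⟨S, hS, hmem⟩ := hstep l (by omega) hInv
    exact ⟨S, hS, fun v hv =>
      qGame_of_invariant Inv hstep hend k _ (by simp; omega) (hmem v hv)⟩

theorem not_qGame_of_invariant (Inv : List V → Prop)
    (hstep : ∀ l : List V, l.length < m → Inv l →
      ∀ S : Finset V, #S = lam l.length → ∃ v ∈ S, Inv (l ++ [v]))
    (hend : ∀ l : List V, l.length = m → Inv l → ¬ P l) :
    ∀ (k : ℕ) (l : List V), l.length + k = m → Inv l → ¬ qGame lam P k l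
  | 0, l, hl, hInv => hend l hl hInv
  | k + 1, l, hl, hInv => fun ⟨S, hS, hwin⟩ => by
    obtain ⟨v, hv, hInv'⟩ := hstep l (by omega) hInv S hS
    exact not_qGame_of_invariant Inv hstep hend k _ (by simp; omega) hInv' (hwin v hv)

end Game

section Coloring

variable {V : Type*} (E : ℕ → ℕ → Prop) (d : V)

def IsProperColoring (l : List V) : Prop :=
  ∀ i j, E i j → l.getD i d ≠ l.getD j d

def IsProperColoringSoFar (l : List V) : Prop :=
  ∀ t s, E t s → t < s → s < l.length → l.getD t d ≠ l.getD s d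

def HasMonochromaticEdge (l : List V) : Prop :=
  ∃ t s, E t s ∧ t < l.length ∧ s < l.length ∧ l.getD t d = l.getD s d

open Classical in
noncomputable def earlierNeighbors (k : ℕ) : Finset ℕ := {t ∈ range k | E t k}

noncomputable def earlierNeighborColors [DecidableEq V] (l : List V) : Finset V :=
  (earlierNeighbors E l.length).image (l.getD · d)

variable {E d}

theorem card_earlierNeighbors_le_of_not_exists {k c : ℕ}
    (h : ¬ ∃ T : Finset ℕ, #T = c + 1 ∧ ∀ t ∈ T, t < k ∧ E t k) :
    #(earlierNeighbors E k) ≤ c := by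
  by_contra! hlt
  obtain ⟨T, hTsub, hT⟩ := exists_subset_card_eq (Nat.succ_le_of_lt hlt)
  exact h ⟨T, hT, fun t ht => by simpa [earlierNeighbors] using hTsub ht⟩

theorem getD_append_singleton_length (l : List V) (v : V) :
    (l ++ [v]).getD l.length d = v := by
  simp

theorem isProperColoringSoFar_nil : IsProperColoringSoFar E d [] :=
  fun _ _ _ _ hs => absurd hs (Nat.not_lt_zero _)

theorem IsProperColoringSoFar.append [DecidableEq V] {l : List V} {v : V}
    (h : IsProperColoringSoFar E d l) (hv : v ∉ earlierNeighborColors E d l) :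
    IsProperColoringSoFar E d (l ++ [v]) := by
  intro t s hE hts hs
  obtain hs | rfl : s < l.length ∨ s = l.length := by simp at hs; omega
  · rw [List.getD_append _ _ _ _ (hts.trans hs), List.getD_append _ _ _ _ hs]
    exact h t s hE hts hs
  · rw [List.getD_append _ _ _ _ hts, getD_append_singleton_length]
    exact fun heq => hv (mem_image.2 ⟨t, by simp [earlierNeighbors, hts, hE], heq⟩)

theorem IsProperColoringSoFar.isProperColoring {l : List V}
    (h : IsProperColoringSoFar E d l) (hsym : ∀ i j, E i j → E j i) (hirr : ∀ i, ¬ E i i)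
    (hrange : ∀ i j, E i j → i < l.length ∧ j < l.length) :
    IsProperColoring E d l := by
  intro i j hE
  obtain ⟨hi, hj⟩ := hrange i j hE
  rcases lt_trichotomy i j with hij | rfl | hij
  · exact h i j hE hij hj
  · exact absurd hE (hirr i)
  · exact (h j i (hsym i j hE) hij hi).symm

theorem HasMonochromaticEdge.append {l : List V} (h : HasMonochromaticEdge E d l) (v : V) :
    HasMonochromaticEdge E d (l ++ [v]) := by
  obtain ⟨t, s, hE, ht, hs, heq⟩ := h
  refine ⟨t, s, hE, by simp; omega, by simp; omega, ?_⟩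
  rwa [List.getD_append _ _ _ _ ht, List.getD_append _ _ _ _ hs]

theorem HasMonochromaticEdge.not_isProperColoring {l : List V}
    (h : HasMonochromaticEdge E d l) : ¬ IsProperColoring E d l := by
  obtain ⟨t, s, hE, -, -, heq⟩ := h
  exact fun hP => hP t s hE heq

theorem exists_mem_isProperColoringSoFar_append [DecidableEq V] {T : Finset ℕ}
    {S : Finset V} {l : List V} (h : IsProperColoringSoFar (fun t s => t ∈ T ∧ s ∈ T) d l)
    (hpos : 0 < #S) (hT : #T ≤ #S) :
    ∃ v ∈ S, IsProperColoringSoFar (fun t s => t ∈ T ∧ s ∈ T) d (l ++ [v]) := by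
  have hleaves : #(earlierNeighbors (fun t s => t ∈ T ∧ s ∈ T) l.length) < #S := by
    by_cases hk : l.length ∈ T
    · have hsub :
          earlierNeighbors (fun t s => t ∈ T ∧ s ∈ T) l.length ⊆ T.erase l.length := fun t ht => by
          simp only [earlierNeighbors, mem_filter, mem_range] at ht
          simp [ht, ht.1.ne]
      have := card_le_card hsub
      rw [card_erase_of_mem hk] at this
      have := card_pos.2 ⟨_, hk⟩
      omega
    · simpa [earlierNeighbors, hk] using hpos
  obtain ⟨v, hv, hfresh⟩ :=
    exists_mem_notMem_of_card_lt_card (card_image_le.trans_lt hleaves)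
  exact ⟨v, hv, h.append hfresh⟩

end Coloring

section Strategies

variable {V : Type*} [Fintype V] [DecidableEq V] {E : ℕ → ℕ → Prop} {lam : ℕ → ℕ} {m : ℕ}

theorem IsProperColoringSoFar.exists_card_eq_forall_append (d : V) {l : List V} {c : ℕ}
    (h : IsProperColoringSoFar E d l)
    (hcard : #(earlierNeighbors E l.length) + c ≤ Fintype.card V) :
    ∃ S : Finset V, #S = c ∧ ∀ v ∈ S, IsProperColoringSoFar E d (l ++ [v]) := by
  have hc : c ≤ #(univ \ earlierNeighborColors E d l) := by
    have := card_image_le (s := earlierNeighbors E l.length) (f := (l.getD · d))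
    rw [card_univ_sdiff]
    unfold earlierNeighborColors
    omega
  obtain ⟨S, hSsub, hS⟩ := exists_subset_card_eq hc
  exact ⟨S, hS, fun v hv => h.append (mem_sdiff.1 (hSsub hv)).2⟩

theorem qGame_isProperColoring (d : V) (hsym : ∀ i j, E i j → E j i) (hirr : ∀ i, ¬ E i i)
    (hrange : ∀ i j, E i j → i < m ∧ j < m)
    (hcard : ∀ k < m, #(earlierNeighbors E k) + lam k ≤ Fintype.card V) :
    qGame lam (IsProperColoring E d) m [] :=
  qGame_of_invariant (m := m) (IsProperColoringSoFar E d)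
    (fun _ hl h => h.exists_card_eq_forall_append d (hcard _ hl))
    (fun _ hl h => h.isProperColoring hsym hirr (hl ▸ hrange)) m [] (Nat.zero_add m)
    isProperColoringSoFar_nil

theorem exists_mem_hasMonochromaticEdge_append {d : V} {T : Finset ℕ} {S : Finset V}
    {l : List V} (h : IsProperColoringSoFar (fun t s => t ∈ T ∧ s ∈ T) d l)
    (hTi : ∀ t ∈ T, t < l.length ∧ E t l.length) (hcard : Fintype.card V < #S + #T) :
    ∃ v ∈ S, HasMonochromaticEdge E d (l ++ [v]) := by
  have hinj : Set.InjOn (l.getD · d) T := by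
    intro t ht s hs heq
    by_contra hne
    rcases lt_or_gt_of_ne hne with hts | hst
    · exact h t s ⟨ht, hs⟩ hts (hTi s hs).1 heq
    · exact h s t ⟨hs, ht⟩ hst (hTi t ht).1 heq.symm
  rw [← card_image_of_injOn hinj] at hcard
  obtain ⟨v, hv⟩ :=
    inter_nonempty_of_card_lt_card_add_card (subset_univ _) (subset_univ _) hcard
  obtain ⟨hvS, hvT⟩ := mem_inter.1 hv
  obtain ⟨t, ht, rfl⟩ := mem_image.1 hvT
  obtain ⟨htl, hE⟩ := hTi t ht
  refine ⟨_, hvS, t, l.length, hE, by simp; omega, by simp, ?_⟩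
  rw [List.getD_append _ _ _ _ htl, getD_append_singleton_length]

theorem not_qGame_isProperColoring (d : V) {i : ℕ} (hi : i < m) {T : Finset ℕ}
    (hTi : ∀ t ∈ T, t < i ∧ E t i) (hpos : ∀ k < m, 0 < lam k) (hleaf : ∀ k < m, #T ≤ lam k)
    (hcentre : Fintype.card V < lam i + #T) :
    ¬ qGame lam (IsProperColoring E d) m [] := by
  refine not_qGame_of_invariant (m := m) (fun l => HasMonochromaticEdge E d l ∨
      l.length ≤ i ∧ IsProperColoringSoFar (fun t s => t ∈ T ∧ s ∈ T) d l)
    ?_ ?_ m [] (Nat.zero_add m) (.inr ⟨Nat.zero_le _, isProperColoringSoFar_nil⟩)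
  · rintro l hl (hmono | ⟨hli, hleaves⟩) S hS
    · obtain ⟨v, hv⟩ := card_pos.1 (hS ▸ hpos _ hl)
      exact ⟨v, hv, .inl (hmono.append v)⟩
    obtain rfl | hli := hli.eq_or_lt
    · obtain ⟨v, hv, hmono⟩ :=
        exists_mem_hasMonochromaticEdge_append hleaves hTi (hS ▸ hcentre)
      exact ⟨v, hv, .inl hmono⟩
    · obtain ⟨v, hv, h⟩ :=
        exists_mem_isProperColoringSoFar_append hleaves (hS ▸ hpos _ hl) (hS ▸ hleaf _ hl)
      exact ⟨v, hv, .inr ⟨by simp; omega, h⟩⟩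
  · rintro l hl (hmono | ⟨hli, -⟩)
    · exact hmono.not_isProperColoring
    · omega

end Strategies

/-- On the clique `K_n`, when every quantifier `∃^{≥λ_i}` satisfies `λ_i > ⌊n/2⌋`,
the quantified sentence with conjunction graph `E` on variables `0,…,m-1` holds iff
`D_ψ` contains no `(n - λ_i + 1)`-star all of whose leaves precede its centre `i`. -/
theorem clique_game_iff_no_star (n m : ℕ) (hn : 1 ≤ n) (lam : ℕ → ℕ)
    (hlam : ∀ i < m, n / 2 < lam i ∧ lam i ≤ n)
    (E : ℕ → ℕ → Prop) (hsym : ∀ i j, E i j → E j i) (hirr : ∀ i, ¬ E i i)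
    (hrange : ∀ i j, E i j → i < m ∧ j < m) :
    qGame lam
      (fun l : List (Fin n) => ∀ i j, E i j → l.getD i ⟨0, hn⟩ ≠ l.getD j ⟨0, hn⟩)
      m [] ↔
    ¬ ∃ i < m, ∃ T : Finset ℕ, T.card = n - lam i + 1 ∧ ∀ t ∈ T, t < i ∧ E t i := by
  constructor
  · rintro hwin ⟨i, hi, T, hT, hTi⟩
    have hlami := hlam i hi
    refine not_qGame_isProperColoring (⟨0, hn⟩ : Fin n) hi hTi
      (fun k hk => by have := hlam k hk; omega) (fun k hk => by have := hlam k hk; omega)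
      ?_ hwin
    rw [Fintype.card_fin]
    omega
  · intro hno
    refine qGame_isProperColoring (⟨0, hn⟩ : Fin n) hsym hirr hrange fun k hk => ?_
    have := card_earlierNeighbors_le_of_not_exists fun hT => hno ⟨k, hk, hT⟩
    rw [Fintype.card_fin]
    have := hlam k hk
    omega
end

section
/- Let H be a bipartite graph that contains a 4-cycle C_4 as a subgraph. A {1,2}-quantified conjunctive sentence Ψ (each variable quantified by ∃^{≥1} or ∃^{≥2}) is true in H if and only if the graph D_ψ of its quantifier-free part is bipartite. -/
namespace qGame

variable {V : Type*} [DecidableEq V] {lam : ℕ → ℕ} {P : List V → Prop}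

theorem exists_play (hlam : ∀ i, lam i ≠ 0) :
    ∀ {k : ℕ} {l : List V}, qGame lam P k l → ∃ l' : List V, l'.length = k ∧ P (l ++ l')
  | 0, l, h => ⟨[], rfl, by simpa [qGame] using h⟩
  | k + 1, l, ⟨S, hcard, hS⟩ => by
    obtain ⟨v, hv⟩ : S.Nonempty := Finset.card_pos.mp (hcard ▸ Nat.pos_of_ne_zero (hlam _))
    obtain ⟨l', hlen, hP⟩ := exists_play hlam (hS v hv)
    exact ⟨v :: l', by simp [hlen], by simpa using hP⟩

theorem of_forall_mem (S : ℕ → Finset V) (hS : ∀ i, (S i).card = lam i) :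
    ∀ {k : ℕ} {l : List V}, (∀ l' : List V, l'.length = k →
      (∀ i (hi : i < l'.length), l'[i] ∈ S (l.length + i)) → P (l ++ l')) → qGame lam P k l
  | 0, l, hP => by simpa [qGame] using hP [] rfl (by simp)
  | k + 1, l, hP => by
    refine ⟨S l.length, hS _, fun v hv => of_forall_mem S hS fun l' hlen hmem => ?_⟩
    have hvl' : ∀ i (hi : i < (v :: l').length), (v :: l')[i] ∈ S (l.length + i) := by
      rintro (_ | i) hi
      · simpa using hv
      · simpa [Nat.add_right_comm, Nat.add_assoc] using hmem i (by simpa using hi)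
    simpa using hP (v :: l') (by simp [hlen]) hvl'

end qGame

section FourCycle

variable {V : Type*} [DecidableEq V] (a b c d : V)

def cycleSide (t : Bool) : Finset V := cond t {b, d} {a, c}

variable {a b c d}

theorem card_cycleSide (hac : a ≠ c) (hbd : b ≠ d) (t : Bool) :
    (cycleSide a b c d t).card = 2 := by
  cases t <;> simp [cycleSide, hac, hbd]

theorem SimpleGraph.adj_of_mem_cycleSide (H : SimpleGraph V)
    (hab : H.Adj a b) (hbc : H.Adj b c) (hcd : H.Adj c d) (hda : H.Adj d a)
    {s t : Bool} (hst : s ≠ t) {u v : V}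
    (hu : u ∈ cycleSide a b c d s) (hv : v ∈ cycleSide a b c d t) : H.Adj u v := by
  have hside : ∀ {x y}, x ∈ cycleSide a b c d false → y ∈ cycleSide a b c d true → H.Adj x y := by
    simp only [cycleSide, cond, Finset.mem_insert, Finset.mem_singleton]
    rintro x y (rfl | rfl) (rfl | rfl)
    exacts [hab, hda.symm, hbc.symm, hcd]
  cases s <;> cases t <;> simp only [ne_eq, not_true_eq_false] at hst
  · exact hside hu hv
  · exact (hside hv hu).symm

end FourCycle

theorem bipartite_with_c4_game_iff_bipartite_general {V : Type*} [DecidableEq V]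
    (H : SimpleGraph V)
    (hbip : ∃ col : V → Bool, ∀ u v, H.Adj u v → col u ≠ col v)
    (a b c d : V)
    (hab : H.Adj a b) (hbc : H.Adj b c) (hcd : H.Adj c d) (hda : H.Adj d a)
    (hac : a ≠ c) (hbd : b ≠ d)
    (m : ℕ) (lam : ℕ → ℕ) (hlam : ∀ i, lam i = 1 ∨ lam i = 2)
    (E : ℕ → ℕ → Prop)
    (hrange : ∀ i j, E i j → i < m ∧ j < m) :
    qGame lam
      (fun l : List V => ∀ i j, E i j → H.Adj (l.getD i a) (l.getD j a))
      m [] ↔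
    ∃ col : ℕ → Bool, ∀ i j, E i j → col i ≠ col j := by
  constructor
  · intro hgame
    obtain ⟨colH, hcolH⟩ := hbip
    obtain ⟨l, -, hl⟩ := qGame.exists_play (fun i => by rcases hlam i with h | h <;> omega) hgame
    exact ⟨fun i => colH (l.getD i a), fun i j hij => hcolH _ _ (hl i j hij)⟩
  · rintro ⟨col, hcol⟩
    have hoffer : ∀ i, ∃ S ⊆ cycleSide a b c d (col i), S.card = lam i := fun i =>
      Finset.exists_subset_card_eq <| by
        rw [card_cycleSide hac hbd]; rcases hlam i with h | h <;> omega
    choose S hSside hScard using hoffer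
    refine qGame.of_forall_mem S hScard fun l hlen hmem i j hij => ?_
    obtain ⟨hi, hj⟩ := hrange i j hij
    have hside : ∀ k < m, l.getD k a ∈ cycleSide a b c d (col k) := fun k hk => by
      rw [List.getD_eq_getElem _ _ (hlen ▸ hk)]
      exact hSside k (by simpa using hmem k (hlen ▸ hk))
    simpa using H.adj_of_mem_cycleSide hab hbc hcd hda (hcol i j hij) (hside i hi) (hside j hj)

/-- On a bipartite graph `H` containing a 4-cycle `a,b,c,d`, a `{1,2}`-quantified
conjunctive sentence with conjunction graph `E` on variables `0,…,m-1` is true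
iff `D_ψ` is bipartite. -/
theorem bipartite_with_c4_game_iff_bipartite {V : Type*} [DecidableEq V]
    (H : SimpleGraph V)
    (hbip : ∃ col : V → Bool, ∀ u v, H.Adj u v → col u ≠ col v)
    (a b c d : V)
    (hab : H.Adj a b) (hbc : H.Adj b c) (hcd : H.Adj c d) (hda : H.Adj d a)
    (hac : a ≠ c) (hbd : b ≠ d)
    (m : ℕ) (lam : ℕ → ℕ) (hlam : ∀ i, lam i = 1 ∨ lam i = 2)
    (E : ℕ → ℕ → Prop) (hsym : ∀ i j, E i j → E j i) (hirr : ∀ i, ¬ E i i)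
    (hrange : ∀ i j, E i j → i < m ∧ j < m) :
    qGame lam
      (fun l : List V => ∀ i j, E i j → H.Adj (l.getD i a) (l.getD j a))
      m [] ↔
    ∃ col : ℕ → Bool, ∀ i j, E i j → col i ≠ col j :=
  bipartite_with_c4_game_iff_bipartite_general H hbip a b c d hab hbc hcd hda hac hbd m lam hlam E
    hrange
end

section
/- In the reflexive 4-cycle C*_4 (vertices 0,1,2,3 with loops and edges between i and i±1 mod 4), the counting quantifiers ∃^{≥2} and ∃^{≥3} are expressible using ∃ and ∀: for any property φ, there exist at least 2 vertices x with φ(x) iff ∀x' ∃x (E(x',x) ∧ φ(x)), and there exist at least 3 vertices x with φ(x) iff ∀x'' ∀x' ∃x (E(x'',x) ∧ E(x',x) ∧ φ(x)). -/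
/-!
`C*_4` is the complement of the perfect matching `x ↦ x + 2` (with loops added), so the closed
neighbourhood of `v` is everything except `v + 2`, and the common closed neighbourhood of `u` and `v`
is everything except `{u + 2, v + 2}`. Hence every vertex has a neighbour in `S` iff `S` lies in no
singleton, i.e. `|S| ≥ 2`, and every pair has a common neighbour in `S` iff `S` lies in no set
`{a, b}`, i.e. `|S| ≥ 3`.
-/

/-- The edge relation of the reflexive 4-cycle `C*_4` on `ZMod 4`. -/
def reflC4 (i j : ZMod 4) : Prop := i = j ∨ i = j + 1 ∨ j = i + 1

namespace Set

variable {α : Type*} {s : Set α}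

theorem ncard_le_two_iff_subset_pair [Nonempty α] (hs : s.Finite := by toFinite_tac) :
    s.ncard ≤ 2 ↔ ∃ x y : α, s ⊆ {x, y} := by
  constructor
  · intro h
    obtain h1 | h2 := Nat.lt_or_eq_of_le h
    · obtain ⟨x, hx⟩ := (ncard_le_one_iff_subset_singleton hs).mp (Nat.le_of_lt_succ h1)
      exact ⟨x, x, by simpa using hx⟩
    · obtain ⟨x, y, -, rfl⟩ := ncard_eq_two.mp h2
      exact ⟨x, y, subset_rfl⟩
  · rintro ⟨x, y, hxy⟩
    calc s.ncard ≤ ({x, y} : Set α).ncard := ncard_le_ncard hxy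
      _ ≤ ({y} : Set α).ncard + 1 := ncard_insert_le x {y}
      _ = 2 := by rw [ncard_singleton]

end Set

theorem reflC4_iff_ne_add_two {i j : ZMod 4} : reflC4 i j ↔ j ≠ i + 2 := by
  unfold reflC4
  revert i j
  decide

theorem exists_reflC4_and_iff_not_subset {p : ZMod 4 → Prop} (v : ZMod 4) :
    (∃ x, reflC4 v x ∧ p x) ↔ ¬ {x | p x} ⊆ {v + 2} := by
  simp only [reflC4_iff_ne_add_two, Set.not_subset, Set.mem_ofPred_eq, Set.mem_singleton_iff]
  exact exists_congr fun _ => and_comm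

theorem exists_reflC4_reflC4_and_iff_not_subset {p : ZMod 4 → Prop} (u v : ZMod 4) :
    (∃ x, reflC4 u x ∧ reflC4 v x ∧ p x) ↔ ¬ {x | p x} ⊆ {u + 2, v + 2} := by
  simp only [reflC4_iff_ne_add_two, Set.not_subset, Set.mem_ofPred_eq, Set.mem_insert_iff,
    Set.mem_singleton_iff, not_or]
  exact exists_congr fun _ => by tauto

theorem forall_exists_reflC4_and_iff {p : ZMod 4 → Prop} :
    (∀ v, ∃ x, reflC4 v x ∧ p x) ↔ ∀ a, ¬ {x | p x} ⊆ {a} := by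
  simp only [exists_reflC4_and_iff_not_subset]
  exact ⟨fun h a => by simpa using h (a - 2), fun h v => h (v + 2)⟩

theorem forall_exists_reflC4_reflC4_and_iff {p : ZMod 4 → Prop} :
    (∀ u v, ∃ x, reflC4 u x ∧ reflC4 v x ∧ p x) ↔ ∀ a b, ¬ {x | p x} ⊆ {a, b} := by
  simp only [exists_reflC4_reflC4_and_iff_not_subset]
  exact ⟨fun h a b => by simpa using h (a - 2) (b - 2), fun h u v => h (u + 2) (v + 2)⟩

/-- On the reflexive 4-cycle, `∃^{≥2}` and `∃^{≥3}` are expressible with `∃`, `∀`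
and the edge relation: `|{x : φ x}| ≥ 2` iff every vertex has an `E`-neighbour
satisfying `φ`, and `|{x : φ x}| ≥ 3` iff every pair of vertices has a common
`E`-neighbour satisfying `φ`. -/
theorem reflC4_counting_expressible (φ : ZMod 4 → Prop) :
    (2 ≤ {x | φ x}.ncard ↔ ∀ x', ∃ x, reflC4 x' x ∧ φ x) ∧
    (3 ≤ {x | φ x}.ncard ↔ ∀ x'' x', ∃ x, reflC4 x'' x ∧ reflC4 x' x ∧ φ x) := by
  rw [forall_exists_reflC4_and_iff, forall_exists_reflC4_reflC4_and_iff]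
  constructor
  · exact not_le.symm.trans <| by
      simpa only [not_exists] using (Set.ncard_le_one_iff_subset_singleton (s := {x | φ x})).not
  · exact not_le.symm.trans <| by
      simpa only [not_exists] using (Set.ncard_le_two_iff_subset_pair (s := {x | φ x})).not
end
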